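/- arXiv:1806.03120 — 4 statements merged into one kernel-verified Lean document; each statement's English description precedes it below -/
import Mathlib

section
/- Fix a symmetric positive semidefinite matrix Ω ∈ ℝ^{p×p}. Then the variational objective J(B,M,S) is concave on the convex domain D = {(B,M,S) ∈ ℝ^{d×p} × ℝ^{n×p} × ℝ^{n×p} : S_{ij} > 0 for all i,j}. -/
open Matrix MeasureTheory

/-- The variational objective `J(B, M, S)` of the sparse PLN-network model, for data `Y`,
offsets `O`, design matrix `X` and latent precision matrix `Ω`. -/
noncomputable def varObj (n p d : ℕ) (Y O : Matrix (Fin n) (Fin p) ℝ)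
    (X : Matrix (Fin n) (Fin d) ℝ) (Ω : Matrix (Fin p) (Fin p) ℝ)
    (B : Matrix (Fin d) (Fin p) ℝ) (M S : Matrix (Fin n) (Fin p) ℝ) : ℝ :=
  (∑ i, ∑ j, (Y i j * (O + X * B + M) i j
      - Real.exp ((O + X * B + M) i j + S i j / 2)
      + (1 / 2) * Real.log (S i j)))
    - (1 / 2) * (M * Ω * Mᵀ).trace
    - (1 / 2) * ∑ i, ∑ j, S i j * Ω j j

/-- Trace of a real PSD matrix is nonnegative. -/
lemma psd_trace_nonneg {p : ℕ} {A : Matrix (Fin p) (Fin p) ℝ} (hA : A.PosSemidef) :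
    0 ≤ A.trace := by
  rw [Matrix.trace]
  apply Finset.sum_nonneg
  intro i _
  exact hA.diag_nonneg

lemma quad_expand {n p : ℕ} (Ω : Matrix (Fin p) (Fin p) ℝ)
    (c e : ℝ) (M N : Matrix (Fin n) (Fin p) ℝ) :
    ((c • M + e • N) * Ω * (c • M + e • N)ᵀ).trace
      = c * c * (M * Ω * Mᵀ).trace + c * e * (M * Ω * Nᵀ).trace
        + e * c * (N * Ω * Mᵀ).trace + e * e * (N * Ω * Nᵀ).trace := by
  simp only [Matrix.add_mul, Matrix.mul_add, Matrix.smul_mul, Matrix.mul_smul,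
    Matrix.transpose_add, Matrix.transpose_smul, Matrix.trace_add, Matrix.trace_smul,
    smul_smul, smul_eq_mul]
  ring

/-- Convexity of the quadratic form `M ↦ tr (M Ω Mᵀ)` for PSD `Ω`. -/
lemma quad_convex {n p : ℕ} {Ω : Matrix (Fin p) (Fin p) ℝ} (hΩ : Ω.PosSemidef)
    (M N : Matrix (Fin n) (Fin p) ℝ) {a b : ℝ} (ha : 0 ≤ a) (hb : 0 ≤ b) (hab : a + b = 1) :
    ((a • M + b • N) * Ω * (a • M + b • N)ᵀ).trace
      ≤ a * (M * Ω * Mᵀ).trace + b * (N * Ω * Nᵀ).trace := by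
  have hpsd : ∀ P : Matrix (Fin n) (Fin p) ℝ, 0 ≤ (P * Ω * Pᵀ).trace := by
    intro P
    exact psd_trace_nonneg (by simpa using hΩ.mul_mul_conjTranspose_same P)
  have hsymm : (M * Ω * Nᵀ).trace = (N * Ω * Mᵀ).trace := by
    have hΩt : Ωᵀ = Ω := (by simpa using hΩ.1 : Ω.IsSymm).eq
    rw [← Matrix.trace_transpose (M * Ω * Nᵀ)]
    simp [Matrix.transpose_mul, hΩt, Matrix.mul_assoc]
  have hdiff : 0 ≤ (((1:ℝ) • M + (-1:ℝ) • N) * Ω * ((1:ℝ) • M + (-1:ℝ) • N)ᵀ).trace :=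
    hpsd _
  rw [quad_expand] at hdiff
  have hd2 : 0 ≤ (M * Ω * Mᵀ).trace - (M * Ω * Nᵀ).trace - (N * Ω * Mᵀ).trace
      + (N * Ω * Nᵀ).trace := by linarith
  rw [quad_expand]
  have e1 : a * a * (M * Ω * Mᵀ).trace
      = a * (M * Ω * Mᵀ).trace - a * b * (M * Ω * Mᵀ).trace := by
    linear_combination a * (M * Ω * Mᵀ).trace * hab
  have e2 : b * b * (N * Ω * Nᵀ).trace
      = b * (N * Ω * Nᵀ).trace - a * b * (N * Ω * Nᵀ).trace := by
    linear_combination b * (N * Ω * Nᵀ).trace * hab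
  have key : 0 ≤ a * b * ((M * Ω * Mᵀ).trace - (M * Ω * Nᵀ).trace - (N * Ω * Mᵀ).trace
      + (N * Ω * Nᵀ).trace) := mul_nonneg (mul_nonneg ha hb) hd2
  nlinarith [e1, e2, key]

/-- The pointwise (per-entry) concavity inequality. -/
lemma term_ineq (c u v s t a b : ℝ) (ha : 0 ≤ a) (hb : 0 ≤ b) (hab : a + b = 1)
    (hs : 0 < s) (ht : 0 < t) :
    a * (c * u - Real.exp (u + s / 2) + (1 / 2) * Real.log s)
      + b * (c * v - Real.exp (v + t / 2) + (1 / 2) * Real.log t)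
    ≤ c * (a * u + b * v) - Real.exp ((a * u + b * v) + (a * s + b * t) / 2)
      + (1 / 2) * Real.log (a * s + b * t) := by
  have hexp : Real.exp (a * (u + s / 2) + b * (v + t / 2))
      ≤ a * Real.exp (u + s / 2) + b * Real.exp (v + t / 2) := by
    simpa using convexOn_exp.2 (Set.mem_univ (u + s / 2)) (Set.mem_univ (v + t / 2)) ha hb hab
  have hlog : a * Real.log s + b * Real.log t ≤ Real.log (a * s + b * t) := by
    simpa using strictConcaveOn_log_Ioi.concaveOn.2
      (Set.mem_Ioi.2 hs) (Set.mem_Ioi.2 ht) ha hb hab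
  have harg : (a * u + b * v) + (a * s + b * t) / 2
      = a * (u + s / 2) + b * (v + t / 2) := by ring
  rw [harg]
  nlinarith [hexp, hlog]

lemma comb_pos {s t a b : ℝ} (ha : 0 ≤ a) (hb : 0 ≤ b) (hab : a + b = 1)
    (hs : 0 < s) (ht : 0 < t) : 0 < a * s + b * t := by
  rcases ha.lt_or_eq with ha' | ha'
  · nlinarith [mul_pos ha' hs, mul_nonneg hb ht.le]
  · have hb1 : b = 1 := by linarith
    rw [← ha', hb1]; simpa using ht

/-- For a fixed symmetric positive semidefinite matrix `Ω`, the variational objective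
`J(B, M, S)` is concave on the convex domain `{(B, M, S) : Sᵢⱼ > 0 for all i, j}`. -/
theorem varObj_concaveOn (n p d : ℕ) (hn : 0 < n) (hp : 0 < p) (hd : 0 < d)
    (Y O : Matrix (Fin n) (Fin p) ℝ) (X : Matrix (Fin n) (Fin d) ℝ)
    (Ω : Matrix (Fin p) (Fin p) ℝ) (hΩ : Ω.PosSemidef) :
    ConcaveOn ℝ
      {x : Matrix (Fin d) (Fin p) ℝ × Matrix (Fin n) (Fin p) ℝ × Matrix (Fin n) (Fin p) ℝ |
        ∀ i j, 0 < x.2.2 i j}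
      (fun x => varObj n p d Y O X Ω x.1 x.2.1 x.2.2) := by
  constructor
  · -- convexity of the domain
    intro x hx y hy a b ha hb hab
    intro i j
    have : (a • x + b • y).2.2 i j = a * x.2.2 i j + b * y.2.2 i j := by
      simp [Prod.smul_snd, Matrix.add_apply, Matrix.smul_apply, smul_eq_mul]
    rw [this]
    exact comb_pos ha hb hab (hx i j) (hy i j)
  · intro x hx y hy a b ha hb hab
    obtain ⟨B₁, M₁, S₁⟩ := x
    obtain ⟨B₂, M₂, S₂⟩ := y
    simp only [Set.mem_setOf_eq] at hx hy
    simp only [Prod.smul_fst, Prod.smul_snd, Prod.fst_add, Prod.snd_add, smul_eq_mul]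
    unfold varObj
    -- the linear-part entries combine affinely
    have hz : ∀ i j, (O + X * (a • B₁ + b • B₂) + (a • M₁ + b • M₂)) i j
        = a * ((O + X * B₁ + M₁) i j) + b * ((O + X * B₂ + M₂) i j) := by
      intro i j
      have hX : X * (a • B₁ + b • B₂) = a • (X * B₁) + b • (X * B₂) := by
        rw [Matrix.mul_add, Matrix.mul_smul, Matrix.mul_smul]
      rw [hX]
      simp only [Matrix.add_apply, Matrix.smul_apply, smul_eq_mul]
      linear_combination (-(1:ℝ)) * O i j * hab
    have hS : ∀ i j, (a • S₁ + b • S₂) i j = a * S₁ i j + b * S₂ i j := by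
      intro i j; simp [Matrix.add_apply, Matrix.smul_apply, smul_eq_mul]
    -- main sum inequality
    have h1 : ∑ i, ∑ j, (a * (Y i j * (O + X * B₁ + M₁) i j
          - Real.exp ((O + X * B₁ + M₁) i j + S₁ i j / 2) + (1 / 2) * Real.log (S₁ i j))
        + b * (Y i j * (O + X * B₂ + M₂) i j
          - Real.exp ((O + X * B₂ + M₂) i j + S₂ i j / 2) + (1 / 2) * Real.log (S₂ i j)))
        ≤ ∑ i, ∑ j, (Y i j * (O + X * (a • B₁ + b • B₂) + (a • M₁ + b • M₂)) i j
          - Real.exp ((O + X * (a • B₁ + b • B₂) + (a • M₁ + b • M₂)) i j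
              + (a • S₁ + b • S₂) i j / 2)
          + (1 / 2) * Real.log ((a • S₁ + b • S₂) i j)) := by
      apply Finset.sum_le_sum
      intro i _
      apply Finset.sum_le_sum
      intro j _
      rw [hz i j, hS i j]
      exact term_ineq _ _ _ _ _ _ _ ha hb hab (hx i j) (hy i j)
    -- trace inequality
    have h2 : ((a • M₁ + b • M₂) * Ω * (a • M₁ + b • M₂)ᵀ).trace
        ≤ a * (M₁ * Ω * M₁ᵀ).trace + b * (M₂ * Ω * M₂ᵀ).trace :=
      quad_convex hΩ M₁ M₂ ha hb hab
    -- linear S-term equality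
    have h3 : ∑ i, ∑ j, (a • S₁ + b • S₂) i j * Ω j j
        = a * ∑ i, ∑ j, S₁ i j * Ω j j + b * ∑ i, ∑ j, S₂ i j * Ω j j := by
      simp only [hS, Finset.mul_sum, ← Finset.sum_add_distrib]
      apply Finset.sum_congr rfl; intro i _
      apply Finset.sum_congr rfl; intro j _
      ring
    have h4 : a * (∑ i, ∑ j, (Y i j * (O + X * B₁ + M₁) i j
          - Real.exp ((O + X * B₁ + M₁) i j + S₁ i j / 2) + (1 / 2) * Real.log (S₁ i j)))
        + b * (∑ i, ∑ j, (Y i j * (O + X * B₂ + M₂) i j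
          - Real.exp ((O + X * B₂ + M₂) i j + S₂ i j / 2) + (1 / 2) * Real.log (S₂ i j)))
        = ∑ i, ∑ j, (a * (Y i j * (O + X * B₁ + M₁) i j
          - Real.exp ((O + X * B₁ + M₁) i j + S₁ i j / 2) + (1 / 2) * Real.log (S₁ i j))
        + b * (Y i j * (O + X * B₂ + M₂) i j
          - Real.exp ((O + X * B₂ + M₂) i j + S₂ i j / 2) + (1 / 2) * Real.log (S₂ i j))) := by
      simp only [Finset.mul_sum, ← Finset.sum_add_distrib]
    linarith [h1, h2, h3, h4.le, h4.ge]
end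

section
/- Fix a symmetric positive definite matrix Ω ∈ ℝ^{p×p}, and assume the matrix X ∈ ℝ^{n×d} has full column rank (i.e., XB = 0 implies B = 0). Then the variational objective J(B,M,S) is strictly concave on the convex domain D = {(B,M,S) ∈ ℝ^{d×p} × ℝ^{n×p} × ℝ^{n×p} : S_{ij} > 0 for all i,j}. -/
open Matrix MeasureTheory

private lemma combo_pos {a b s t : ℝ} (ha : 0 ≤ a) (hb : 0 ≤ b) (hab : a + b = 1)
    (hs : 0 < s) (ht : 0 < t) : 0 < a * s + b * t := by
  rcases ha.eq_or_lt with h | h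
  · have hb1 : b = 1 := by linarith
    simp [← h, hb1, ht]
  · have h1 : 0 < a * s := mul_pos h hs
    have h2 : 0 ≤ b * t := mul_nonneg hb ht.le
    linarith

private lemma trace_eq {n p : ℕ} (M : Matrix (Fin n) (Fin p) ℝ)
    (Ω : Matrix (Fin p) (Fin p) ℝ) :
    (M * Ω * Mᵀ).trace = ∑ i, M i ⬝ᵥ Ω *ᵥ M i := by
  simp only [Matrix.trace, Matrix.diag, Matrix.mul_apply, Matrix.transpose_apply,
    dotProduct, Matrix.mulVec, Finset.sum_mul, Finset.mul_sum]
  refine Finset.sum_congr rfl fun i _ => ?_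
  rw [Finset.sum_comm]
  exact Finset.sum_congr rfl fun j _ => Finset.sum_congr rfl fun k _ => by ring

private lemma quad_combo {p : ℕ} (Ω : Matrix (Fin p) (Fin p) ℝ) (u v : Fin p → ℝ)
    {a b : ℝ} (hab : a + b = 1) :
    (a • u + b • v) ⬝ᵥ Ω *ᵥ (a • u + b • v)
      = a * (u ⬝ᵥ Ω *ᵥ u) + b * (v ⬝ᵥ Ω *ᵥ v) - a * b * ((u - v) ⬝ᵥ Ω *ᵥ (u - v)) := by
  simp only [Matrix.mulVec_add, Matrix.mulVec_smul, dotProduct_add, add_dotProduct,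
    dotProduct_smul, smul_dotProduct, smul_eq_mul, sub_eq_add_neg, Matrix.mulVec_neg,
    neg_dotProduct, dotProduct_neg]
  linear_combination (a * (u ⬝ᵥ Ω *ᵥ u) + b * (v ⬝ᵥ Ω *ᵥ v)) * hab

/-- Concavity of the scalar building block `(u, s) ↦ y u − exp(u + s/2) + log(s)/2 − c s`. -/
private lemma scalar_term_le (y c : ℝ) {u1 u2 s1 s2 a b : ℝ} (hs1 : 0 < s1) (hs2 : 0 < s2)
    (ha : 0 < a) (hb : 0 < b) (hab : a + b = 1) :
    a * (y * u1 - Real.exp (u1 + s1 / 2) + (1 / 2) * Real.log s1 - c * s1)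
      + b * (y * u2 - Real.exp (u2 + s2 / 2) + (1 / 2) * Real.log s2 - c * s2)
      ≤ y * (a * u1 + b * u2)
          - Real.exp ((a * u1 + b * u2) + (a * s1 + b * s2) / 2)
          + (1 / 2) * Real.log (a * s1 + b * s2) - c * (a * s1 + b * s2) := by
  have hexp : Real.exp (a * (u1 + s1 / 2) + b * (u2 + s2 / 2))
      ≤ a * Real.exp (u1 + s1 / 2) + b * Real.exp (u2 + s2 / 2) := by
    have := convexOn_exp.2 (Set.mem_univ (u1 + s1 / 2)) (Set.mem_univ (u2 + s2 / 2))
      ha.le hb.le hab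
    simpa [smul_eq_mul] using this
  have hlog : a * Real.log s1 + b * Real.log s2 ≤ Real.log (a * s1 + b * s2) := by
    have := strictConcaveOn_log_Ioi.concaveOn.2 (Set.mem_Ioi.2 hs1) (Set.mem_Ioi.2 hs2)
      ha.le hb.le hab
    simpa [smul_eq_mul] using this
  have harg : (a * u1 + b * u2) + (a * s1 + b * s2) / 2
      = a * (u1 + s1 / 2) + b * (u2 + s2 / 2) := by ring
  rw [harg]
  nlinarith [hexp, hlog]

/-- Strict concavity of the scalar building block when the arguments differ. -/
private lemma scalar_term_lt (y c : ℝ) {u1 u2 s1 s2 a b : ℝ} (hs1 : 0 < s1) (hs2 : 0 < s2)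
    (hne : u1 ≠ u2 ∨ s1 ≠ s2) (ha : 0 < a) (hb : 0 < b) (hab : a + b = 1) :
    a * (y * u1 - Real.exp (u1 + s1 / 2) + (1 / 2) * Real.log s1 - c * s1)
      + b * (y * u2 - Real.exp (u2 + s2 / 2) + (1 / 2) * Real.log s2 - c * s2)
      < y * (a * u1 + b * u2)
          - Real.exp ((a * u1 + b * u2) + (a * s1 + b * s2) / 2)
          + (1 / 2) * Real.log (a * s1 + b * s2) - c * (a * s1 + b * s2) := by
  have harg : (a * u1 + b * u2) + (a * s1 + b * s2) / 2
      = a * (u1 + s1 / 2) + b * (u2 + s2 / 2) := by ring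
  rw [harg]
  by_cases hs : s1 = s2
  · have hu : u1 ≠ u2 := hne.resolve_right (by simp [hs])
    have hargne : u1 + s1 / 2 ≠ u2 + s2 / 2 := by
      subst hs; intro h; exact hu (by linarith)
    have hexp : Real.exp (a * (u1 + s1 / 2) + b * (u2 + s2 / 2))
        < a * Real.exp (u1 + s1 / 2) + b * Real.exp (u2 + s2 / 2) := by
      have := strictConvexOn_exp.2 (Set.mem_univ (u1 + s1 / 2)) (Set.mem_univ (u2 + s2 / 2))
        hargne ha hb hab
      simpa [smul_eq_mul] using this
    have hlog : a * Real.log s1 + b * Real.log s2 ≤ Real.log (a * s1 + b * s2) := by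
      have := strictConcaveOn_log_Ioi.concaveOn.2 (Set.mem_Ioi.2 hs1) (Set.mem_Ioi.2 hs2)
        ha.le hb.le hab
      simpa [smul_eq_mul] using this
    nlinarith [hexp, hlog]
  · have hexp : Real.exp (a * (u1 + s1 / 2) + b * (u2 + s2 / 2))
        ≤ a * Real.exp (u1 + s1 / 2) + b * Real.exp (u2 + s2 / 2) := by
      have := convexOn_exp.2 (Set.mem_univ (u1 + s1 / 2)) (Set.mem_univ (u2 + s2 / 2))
        ha.le hb.le hab
      simpa [smul_eq_mul] using this
    have hlog : a * Real.log s1 + b * Real.log s2 < Real.log (a * s1 + b * s2) := by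
      have := strictConcaveOn_log_Ioi.2 (Set.mem_Ioi.2 hs1) (Set.mem_Ioi.2 hs2) hs ha hb hab
      simpa [smul_eq_mul] using this
    nlinarith [hexp, hlog]

private lemma varObj_eq (n p d : ℕ) (Y O : Matrix (Fin n) (Fin p) ℝ)
    (X : Matrix (Fin n) (Fin d) ℝ) (Ω : Matrix (Fin p) (Fin p) ℝ)
    (B : Matrix (Fin d) (Fin p) ℝ) (M S : Matrix (Fin n) (Fin p) ℝ) :
    varObj n p d Y O X Ω B M S
      = (∑ i, ∑ j, (Y i j * (O + X * B + M) i j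
            - Real.exp ((O + X * B + M) i j + S i j / 2)
            + (1 / 2) * Real.log (S i j) - (Ω j j / 2) * S i j))
        - (1 / 2) * ∑ i, M i ⬝ᵥ Ω *ᵥ M i := by
  rw [varObj, trace_eq]
  have h1 : (∑ i, ∑ j, (Y i j * (O + X * B + M) i j
        - Real.exp ((O + X * B + M) i j + S i j / 2)
        + (1 / 2) * Real.log (S i j) - (Ω j j / 2) * S i j))
      = (∑ i, ∑ j, (Y i j * (O + X * B + M) i j
          - Real.exp ((O + X * B + M) i j + S i j / 2)
          + (1 / 2) * Real.log (S i j))) - ∑ i, ∑ j, (Ω j j / 2) * S i j := by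
    rw [← Finset.sum_sub_distrib]
    exact Finset.sum_congr rfl fun i _ => by rw [← Finset.sum_sub_distrib]
  have h2 : (1 / 2 : ℝ) * ∑ i, ∑ j, S i j * Ω j j = ∑ i, ∑ j, (Ω j j / 2) * S i j := by
    rw [Finset.mul_sum]
    exact Finset.sum_congr rfl fun i _ => by
      rw [Finset.mul_sum]; exact Finset.sum_congr rfl fun j _ => by ring
  rw [h1, ← h2]; ring

/-- For a fixed symmetric positive definite matrix `Ω`, if the design matrix `X` has full
column rank, then the variational objective `J(B, M, S)` is strictly concave on the convex
domain `{(B, M, S) : Sᵢⱼ > 0 for all i, j}`. -/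
theorem varObj_strictConcaveOn (n p d : ℕ) (hn : 0 < n) (hp : 0 < p) (hd : 0 < d)
    (Y O : Matrix (Fin n) (Fin p) ℝ) (X : Matrix (Fin n) (Fin d) ℝ)
    (hX : ∀ B : Matrix (Fin d) (Fin p) ℝ, X * B = 0 → B = 0)
    (Ω : Matrix (Fin p) (Fin p) ℝ) (hΩ : Ω.PosDef) :
    StrictConcaveOn ℝ
      {x : Matrix (Fin d) (Fin p) ℝ × Matrix (Fin n) (Fin p) ℝ × Matrix (Fin n) (Fin p) ℝ |
        ∀ i j, 0 < x.2.2 i j}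
    (fun x => varObj n p d Y O X Ω x.1 x.2.1 x.2.2) := by
  constructor
  · -- convexity of the domain
    intro x hx y hy a b ha hb hab
    intro i j
    have h := combo_pos ha hb hab (hx i j) (hy i j)
    simpa [Prod.smul_snd, Prod.snd_add, Matrix.add_apply, Matrix.smul_apply, smul_eq_mul] using h
  · rintro ⟨B1, M1, S1⟩ hx ⟨B2, M2, S2⟩ hy hxy a b ha hb hab
    have hS1 : ∀ i j, 0 < S1 i j := hx
    have hS2 : ∀ i j, 0 < S2 i j := hy
    simp only [Prod.smul_mk, Prod.mk_add_mk, smul_eq_mul]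
    rw [varObj_eq, varObj_eq, varObj_eq]
    -- pointwise descriptions of the combined point
    set L1 : Matrix (Fin n) (Fin p) ℝ := O + X * B1 + M1 with hL1
    set L2 : Matrix (Fin n) (Fin p) ℝ := O + X * B2 + M2 with hL2
    have hLc : ∀ i j, (O + X * (a • B1 + b • B2) + (a • M1 + b • M2)) i j
        = a * L1 i j + b * L2 i j := by
      intro i j
      have hmul : X * (a • B1 + b • B2) = a • (X * B1) + b • (X * B2) := by
        rw [Matrix.mul_add, Matrix.mul_smul, Matrix.mul_smul]
      rw [hmul]
      simp only [hL1, hL2, Matrix.add_apply, Matrix.smul_apply, smul_eq_mul]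
      linear_combination (O i j) * hab.symm
    have hSc : ∀ i j, (a • S1 + b • S2) i j = a * S1 i j + b * S2 i j := by
      intro i j; simp [Matrix.add_apply, Matrix.smul_apply, smul_eq_mul]
    have hMrow : ∀ i, (a • M1 + b • M2) i = a • M1 i + b • M2 i := by
      intro i; funext j; simp [Matrix.add_apply, Matrix.smul_apply]
    -- termwise inequalities
    have hTle : ∀ i j,
        a * (Y i j * L1 i j - Real.exp (L1 i j + S1 i j / 2)
              + (1 / 2) * Real.log (S1 i j) - (Ω j j / 2) * S1 i j)
          + b * (Y i j * L2 i j - Real.exp (L2 i j + S2 i j / 2)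
              + (1 / 2) * Real.log (S2 i j) - (Ω j j / 2) * S2 i j)
          ≤ Y i j * ((O + X * (a • B1 + b • B2) + (a • M1 + b • M2)) i j)
              - Real.exp ((O + X * (a • B1 + b • B2) + (a • M1 + b • M2)) i j
                  + (a • S1 + b • S2) i j / 2)
              + (1 / 2) * Real.log ((a • S1 + b • S2) i j)
              - (Ω j j / 2) * (a • S1 + b • S2) i j := by
      intro i j
      rw [hLc i j, hSc i j]
      exact scalar_term_le (Y i j) (Ω j j / 2) (hS1 i j) (hS2 i j) ha hb hab
    have hQle : ∀ i, a * (M1 i ⬝ᵥ Ω *ᵥ M1 i) + b * (M2 i ⬝ᵥ Ω *ᵥ M2 i)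
          - ((a • M1 + b • M2) i ⬝ᵥ Ω *ᵥ (a • M1 + b • M2) i)
        = a * b * ((M1 i - M2 i) ⬝ᵥ Ω *ᵥ (M1 i - M2 i)) := by
      intro i
      rw [hMrow i, quad_combo Ω (M1 i) (M2 i) hab]
      ring
    have hQnonneg : ∀ i, 0 ≤ (M1 i - M2 i) ⬝ᵥ Ω *ᵥ (M1 i - M2 i) := by
      intro i
      have := hΩ.posSemidef.dotProduct_mulVec_nonneg (M1 i - M2 i)
      simpa using this
    -- sum-level inequalities
    have hPsum : a * (∑ i, ∑ j, (Y i j * L1 i j - Real.exp (L1 i j + S1 i j / 2)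
            + (1 / 2) * Real.log (S1 i j) - (Ω j j / 2) * S1 i j))
          + b * (∑ i, ∑ j, (Y i j * L2 i j - Real.exp (L2 i j + S2 i j / 2)
            + (1 / 2) * Real.log (S2 i j) - (Ω j j / 2) * S2 i j))
        = ∑ i, ∑ j, (a * (Y i j * L1 i j - Real.exp (L1 i j + S1 i j / 2)
            + (1 / 2) * Real.log (S1 i j) - (Ω j j / 2) * S1 i j)
          + b * (Y i j * L2 i j - Real.exp (L2 i j + S2 i j / 2)
            + (1 / 2) * Real.log (S2 i j) - (Ω j j / 2) * S2 i j)) := by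
      rw [Finset.mul_sum, Finset.mul_sum, ← Finset.sum_add_distrib]
      exact Finset.sum_congr rfl fun i _ => by
        rw [Finset.mul_sum, Finset.mul_sum, ← Finset.sum_add_distrib]
    have hQsum : a * (∑ i, M1 i ⬝ᵥ Ω *ᵥ M1 i) + b * (∑ i, M2 i ⬝ᵥ Ω *ᵥ M2 i)
          - ∑ i, (a • M1 + b • M2) i ⬝ᵥ Ω *ᵥ (a • M1 + b • M2) i
        = ∑ i, a * b * ((M1 i - M2 i) ⬝ᵥ Ω *ᵥ (M1 i - M2 i)) := by
      rw [Finset.mul_sum, Finset.mul_sum, ← Finset.sum_add_distrib, ← Finset.sum_sub_distrib]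
      exact Finset.sum_congr rfl fun i _ => hQle i
    have hQge : ∑ i, (a • M1 + b • M2) i ⬝ᵥ Ω *ᵥ (a • M1 + b • M2) i
        ≤ a * (∑ i, M1 i ⬝ᵥ Ω *ᵥ M1 i) + b * (∑ i, M2 i ⬝ᵥ Ω *ᵥ M2 i) := by
      have h : 0 ≤ ∑ i, a * b * ((M1 i - M2 i) ⬝ᵥ Ω *ᵥ (M1 i - M2 i)) :=
        Finset.sum_nonneg fun i _ => mul_nonneg (mul_nonneg ha.le hb.le) (hQnonneg i)
      linarith [hQsum]
    have hPle : a * (∑ i, ∑ j, (Y i j * L1 i j - Real.exp (L1 i j + S1 i j / 2)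
            + (1 / 2) * Real.log (S1 i j) - (Ω j j / 2) * S1 i j))
          + b * (∑ i, ∑ j, (Y i j * L2 i j - Real.exp (L2 i j + S2 i j / 2)
            + (1 / 2) * Real.log (S2 i j) - (Ω j j / 2) * S2 i j))
        ≤ ∑ i, ∑ j, (Y i j * ((O + X * (a • B1 + b • B2) + (a • M1 + b • M2)) i j)
            - Real.exp ((O + X * (a • B1 + b • B2) + (a • M1 + b • M2)) i j
                + (a • S1 + b • S2) i j / 2)
            + (1 / 2) * Real.log ((a • S1 + b • S2) i j)
            - (Ω j j / 2) * (a • S1 + b • S2) i j) := by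
      rw [hPsum]
      exact Finset.sum_le_sum fun i _ => Finset.sum_le_sum fun j _ => hTle i j
    -- case analysis on where strictness comes from
    by_cases hM : M1 = M2
    · have hstrict : ∃ i j, L1 i j ≠ L2 i j ∨ S1 i j ≠ S2 i j := by
        by_cases hS : S1 = S2
        · have hB : B1 ≠ B2 := by
            intro h; exact hxy (by rw [h, hM, hS])
          have hXB : X * B1 ≠ X * B2 := by
            intro h
            apply hB
            have : X * (B1 - B2) = 0 := by rw [Matrix.mul_sub, h, sub_self]
            have := hX _ this
            exact sub_eq_zero.mp this
          have : ∃ i j, (X * B1) i j ≠ (X * B2) i j := by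
            by_contra h
            push_neg at h
            exact hXB (by ext i j; exact h i j)
          obtain ⟨i, j, hij⟩ := this
          refine ⟨i, j, Or.inl ?_⟩
          simp only [hL1, hL2, Matrix.add_apply, hM]
          intro h; exact hij (by linarith)
        · have : ∃ i j, S1 i j ≠ S2 i j := by
            by_contra h
            push_neg at h
            exact hS (by ext i j; exact h i j)
          obtain ⟨i, j, hij⟩ := this
          exact ⟨i, j, Or.inr hij⟩
      obtain ⟨i0, j0, hij0⟩ := hstrict
      have hTlt : a * (Y i0 j0 * L1 i0 j0 - Real.exp (L1 i0 j0 + S1 i0 j0 / 2)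
              + (1 / 2) * Real.log (S1 i0 j0) - (Ω j0 j0 / 2) * S1 i0 j0)
            + b * (Y i0 j0 * L2 i0 j0 - Real.exp (L2 i0 j0 + S2 i0 j0 / 2)
              + (1 / 2) * Real.log (S2 i0 j0) - (Ω j0 j0 / 2) * S2 i0 j0)
          < Y i0 j0 * ((O + X * (a • B1 + b • B2) + (a • M1 + b • M2)) i0 j0)
              - Real.exp ((O + X * (a • B1 + b • B2) + (a • M1 + b • M2)) i0 j0
                  + (a • S1 + b • S2) i0 j0 / 2)
              + (1 / 2) * Real.log ((a • S1 + b • S2) i0 j0)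
              - (Ω j0 j0 / 2) * (a • S1 + b • S2) i0 j0 := by
        rw [hLc i0 j0, hSc i0 j0]
        exact scalar_term_lt (Y i0 j0) (Ω j0 j0 / 2) (hS1 i0 j0) (hS2 i0 j0) hij0 ha hb hab
      have hPlt : a * (∑ i, ∑ j, (Y i j * L1 i j - Real.exp (L1 i j + S1 i j / 2)
              + (1 / 2) * Real.log (S1 i j) - (Ω j j / 2) * S1 i j))
            + b * (∑ i, ∑ j, (Y i j * L2 i j - Real.exp (L2 i j + S2 i j / 2)
              + (1 / 2) * Real.log (S2 i j) - (Ω j j / 2) * S2 i j))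
          < ∑ i, ∑ j, (Y i j * ((O + X * (a • B1 + b • B2) + (a • M1 + b • M2)) i j)
              - Real.exp ((O + X * (a • B1 + b • B2) + (a • M1 + b • M2)) i j
                  + (a • S1 + b • S2) i j / 2)
              + (1 / 2) * Real.log ((a • S1 + b • S2) i j)
              - (Ω j j / 2) * (a • S1 + b • S2) i j) := by
        rw [hPsum]
        refine Finset.sum_lt_sum (fun i _ => Finset.sum_le_sum fun j _ => hTle i j)
          ⟨i0, Finset.mem_univ _, ?_⟩
        exact Finset.sum_lt_sum (fun j _ => hTle i0 j) ⟨j0, Finset.mem_univ _, hTlt⟩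
      linarith [hPlt, hQge]
    · -- M1 ≠ M2 : strictness from the quadratic form
      have : ∃ i, M1 i ≠ M2 i := by
        by_contra h
        push_neg at h
        exact hM (by ext i j; rw [h i])
      obtain ⟨i0, hi0⟩ := this
      have hrow : M1 i0 - M2 i0 ≠ 0 := sub_ne_zero.mpr hi0
      have hpos : 0 < (M1 i0 - M2 i0) ⬝ᵥ Ω *ᵥ (M1 i0 - M2 i0) := by
        have := hΩ.dotProduct_mulVec_pos hrow
        simpa using this
      have hsumpos : 0 < ∑ i, a * b * ((M1 i - M2 i) ⬝ᵥ Ω *ᵥ (M1 i - M2 i)) := by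
        refine Finset.sum_pos' (fun i _ => mul_nonneg (mul_nonneg ha.le hb.le) (hQnonneg i))
          ⟨i0, Finset.mem_univ _, ?_⟩
        exact mul_pos (mul_pos ha hb) hpos
      have hQlt : ∑ i, (a • M1 + b • M2) i ⬝ᵥ Ω *ᵥ (a • M1 + b • M2) i
          < a * (∑ i, M1 i ⬝ᵥ Ω *ᵥ M1 i) + b * (∑ i, M2 i ⬝ᵥ Ω *ᵥ M2 i) := by
        linarith [hQsum, hsumpos]
      linarith [hPle, hQlt]
end

section
/- For fixed M and S (with all S_{ij} > 0), the map B ↦ J(B,M,S) is differentiable at every B ∈ ℝ^{d×p} and its gradient with respect to the Frobenius inner product is Xᵀ(Y − A); that is, its Fréchet derivative at B applied to a direction H ∈ ℝ^{d×p} equals tr(Hᵀ Xᵀ(Y − A)), where A ∈ ℝ^{n×p} has entries A_{ij} = exp((O + XB + M)_{ij} + S_{ij}/2). -/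
open Matrix

attribute [local instance] Matrix.frobeniusNormedAddCommGroup Matrix.frobeniusNormedSpace

/-- For fixed `M` and `S` (with positive entries), the map `B ↦ J(B, M, S)` is
differentiable at every `B`, with gradient `Xᵀ(Y − A)` for the Frobenius inner product:
its Fréchet derivative applied to a direction `H` is `tr(Hᵀ Xᵀ(Y − A))`, where
`A i j = exp((O + XB + M) i j + S i j / 2)`. -/
theorem varObj_gradient_B (n p d : ℕ) (Y O : Matrix (Fin n) (Fin p) ℝ)
    (X : Matrix (Fin n) (Fin d) ℝ) (Ω : Matrix (Fin p) (Fin p) ℝ) (hΩ : Ω.IsSymm)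
    (M S : Matrix (Fin n) (Fin p) ℝ) (hS : ∀ i j, 0 < S i j)
    (B : Matrix (Fin d) (Fin p) ℝ) :
    ∃ L : Matrix (Fin d) (Fin p) ℝ →L[ℝ] ℝ,
      HasFDerivAt (fun B' => varObj n p d Y O X Ω B' M S) L B ∧
      ∀ H : Matrix (Fin d) (Fin p) ℝ,
        L H = (Hᵀ * (Xᵀ *
          (Y - Matrix.of fun i j => Real.exp ((O + X * B + M) i j + S i j / 2)))).trace := by
  classical
  set A : Matrix (Fin n) (Fin p) ℝ :=
    Matrix.of fun i j => Real.exp ((O + X * B + M) i j + S i j / 2) with hA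
  let φ : Fin n → Fin p → (Matrix (Fin d) (Fin p) ℝ →L[ℝ] ℝ) := fun i j =>
    LinearMap.toContinuousLinearMap
      { toFun := fun B' => (X * B') i j
        map_add' := fun B1 B2 => by simp [Matrix.mul_add]
        map_smul' := fun c B' => by simp [Matrix.mul_smul] }
  have hφ : ∀ i j (B' : Matrix (Fin d) (Fin p) ℝ), φ i j B' = (X * B') i j := fun _ _ _ => rfl
  refine ⟨∑ i, ∑ j, (Y i j - A i j) • φ i j, ?_, ?_⟩
  · have hterm : ∀ i j, HasFDerivAt
        (fun B' : Matrix (Fin d) (Fin p) ℝ =>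
          Y i j * (O + X * B' + M) i j
            - Real.exp ((O + X * B' + M) i j + S i j / 2)
            + (1 / 2) * Real.log (S i j))
        ((Y i j - A i j) • φ i j) B := by
      intro i j
      have hφd : HasFDerivAt (fun B' => φ i j B') (φ i j) B := (φ i j).hasFDerivAt
      have hh : HasDerivAt
          (fun t : ℝ => Y i j * (O i j + t + M i j)
            - Real.exp (O i j + t + M i j + S i j / 2)
            + (1 / 2) * Real.log (S i j))
          (Y i j - A i j) ((X * B) i j) := by
        have h1 : HasDerivAt (fun t : ℝ => Y i j * (O i j + t + M i j)) (Y i j)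
            ((X * B) i j) := by
          have := ((hasDerivAt_id ((X * B) i j)).const_add (O i j)).add_const (M i j)
          simpa using this.const_mul (Y i j)
        have h2 : HasDerivAt (fun t : ℝ => Real.exp (O i j + t + M i j + S i j / 2))
            (A i j) ((X * B) i j) := by
          have hd : HasDerivAt (fun t : ℝ => O i j + t + M i j + S i j / 2) 1
              ((X * B) i j) := by
            simpa using (((hasDerivAt_id ((X * B) i j)).const_add (O i j)).add_const
              (M i j)).add_const (S i j / 2)
          have := hd.exp
          simp only [mul_one] at this
          convert this using 1
          rfl
        simpa using (h1.sub h2).add_const ((1 / 2) * Real.log (S i j))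
      have := hh.comp_hasFDerivAt B hφd
      exact this
    have hsum : HasFDerivAt
        (fun B' : Matrix (Fin d) (Fin p) ℝ => ∑ i, ∑ j,
          (Y i j * (O + X * B' + M) i j
            - Real.exp ((O + X * B' + M) i j + S i j / 2)
            + (1 / 2) * Real.log (S i j)))
        (∑ i, ∑ j, (Y i j - A i j) • φ i j) B := by
      apply HasFDerivAt.fun_sum
      intro i _
      exact HasFDerivAt.fun_sum (fun j _ => hterm i j)
    have := (hsum.sub_const ((1 / 2) * (M * Ω * Mᵀ).trace)).sub_const
      ((1 / 2) * ∑ i, ∑ j, S i j * Ω j j)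
    simp only [varObj, sub_sub] at this ⊢
    exact this
  · intro H
    simp only [ContinuousLinearMap.sum_apply, ContinuousLinearMap.smul_apply, hφ,
      smul_eq_mul]
    simp only [Matrix.trace, Matrix.diag, Matrix.mul_apply, Matrix.transpose_apply,
      Matrix.sub_apply, Finset.mul_sum, Finset.sum_mul]
    rw [Finset.sum_comm]
    refine Finset.sum_congr rfl fun j _ => ?_
    rw [Finset.sum_comm]
    refine Finset.sum_congr rfl fun i _ => ?_
    exact Finset.sum_congr rfl fun k _ => by ring
end

section
/- For fixed B and S (with all S_{ij} > 0), the map M ↦ J(B,M,S) is differentiable at every M ∈ ℝ^{n×p} and its gradient with respect to the Frobenius inner product is Y − A − MΩ; that is, its Fréchet derivative at M applied to a direction H ∈ ℝ^{n×p} equals tr(Hᵀ (Y − A − MΩ)), where A ∈ ℝ^{n×p} has entries A_{ij} = exp((O + XB + M)_{ij} + S_{ij}/2). -/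
open Matrix

attribute [local instance] Matrix.frobeniusNormedAddCommGroup Matrix.frobeniusNormedSpace

noncomputable def entryCLM (n p : ℕ) (i : Fin n) (j : Fin p) :
    Matrix (Fin n) (Fin p) ℝ →L[ℝ] ℝ :=
  LinearMap.toContinuousLinearMap
    ((LinearMap.proj j).comp ((LinearMap.proj i : (Fin n → Fin p → ℝ) →ₗ[ℝ] (Fin p → ℝ))))

lemma entryCLM_apply (n p : ℕ) (i : Fin n) (j : Fin p) (M : Matrix (Fin n) (Fin p) ℝ) :
    entryCLM n p i j M = M i j := rfl

lemma hasFDerivAt_entry (n p : ℕ) (i : Fin n) (j : Fin p) (M : Matrix (Fin n) (Fin p) ℝ) :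
    HasFDerivAt (fun M' : Matrix (Fin n) (Fin p) ℝ => M' i j) (entryCLM n p i j) M :=
  (entryCLM n p i j).hasFDerivAt

/-- For fixed `B` and `S` (with positive entries), the map `M ↦ J(B, M, S)` is
differentiable at every `M`, with gradient `Y − A − MΩ` for the Frobenius inner product:
its Fréchet derivative applied to a direction `H` is `tr(Hᵀ (Y − A − MΩ))`, where
`A i j = exp((O + XB + M) i j + S i j / 2)`. -/
theorem varObj_gradient_M (n p d : ℕ) (Y O : Matrix (Fin n) (Fin p) ℝ)
    (X : Matrix (Fin n) (Fin d) ℝ) (Ω : Matrix (Fin p) (Fin p) ℝ) (hΩ : Ω.IsSymm)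
    (B : Matrix (Fin d) (Fin p) ℝ) (S : Matrix (Fin n) (Fin p) ℝ) (hS : ∀ i j, 0 < S i j)
    (M : Matrix (Fin n) (Fin p) ℝ) :
    ∃ L : Matrix (Fin n) (Fin p) ℝ →L[ℝ] ℝ,
      HasFDerivAt (fun M' => varObj n p d Y O X Ω B M' S) L M ∧
      ∀ H : Matrix (Fin n) (Fin p) ℝ,
        L H = (Hᵀ *
          (Y - (Matrix.of fun i j => Real.exp ((O + X * B + M) i j + S i j / 2))
            - M * Ω)).trace := by
  set C : Matrix (Fin n) (Fin p) ℝ := O + X * B with hC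
  set E := entryCLM n p with hE
  set A : Matrix (Fin n) (Fin p) ℝ :=
    Matrix.of (fun i j => Real.exp (C i j + M i j + S i j / 2)) with hA
  -- the sum part
  have hsum : HasFDerivAt
      (fun M' : Matrix (Fin n) (Fin p) ℝ => ∑ i, ∑ j,
        (Y i j * (C i j + M' i j) - Real.exp (C i j + M' i j + S i j / 2)
          + (1 / 2) * Real.log (S i j)))
      (∑ i, ∑ j, (Y i j • E i j - A i j • E i j)) M := by
    apply HasFDerivAt.fun_sum; intro i _
    apply HasFDerivAt.fun_sum; intro j _
    have h1 : HasFDerivAt (fun M' : Matrix (Fin n) (Fin p) ℝ => Y i j * (C i j + M' i j))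
        (Y i j • E i j) M := ((hasFDerivAt_entry n p i j M).const_add _).const_mul _
    have h2 : HasFDerivAt
        (fun M' : Matrix (Fin n) (Fin p) ℝ => Real.exp (C i j + M' i j + S i j / 2))
        (A i j • E i j) M := by
      have := (((hasFDerivAt_entry n p i j M).const_add (C i j)).add_const (S i j / 2)).exp
      exact this
    exact (h1.sub h2).add_const _
  -- the quadratic part
  have hq : HasFDerivAt
      (fun M' : Matrix (Fin n) (Fin p) ℝ => ∑ i, ∑ k,
        (∑ j, M' i j * Ω j k) * M' i k)
      (∑ i, ∑ k, ((∑ j, M i j * Ω j k) • E i k + M i k • (∑ j, Ω j k • E i j))) M := by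
    apply HasFDerivAt.fun_sum; intro i _
    apply HasFDerivAt.fun_sum; intro k _
    have hin : HasFDerivAt (fun M' : Matrix (Fin n) (Fin p) ℝ => ∑ j, M' i j * Ω j k)
        (∑ j, Ω j k • E i j) M := by
      apply HasFDerivAt.fun_sum; intro j _
      exact (hasFDerivAt_entry n p i j M).mul_const _
    exact hin.mul (hasFDerivAt_entry n p i k M)
  -- combine
  have hfun : (fun M' => varObj n p d Y O X Ω B M' S) =
      (fun M' : Matrix (Fin n) (Fin p) ℝ =>
        (∑ i, ∑ j, (Y i j * (C i j + M' i j) - Real.exp (C i j + M' i j + S i j / 2)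
          + (1 / 2) * Real.log (S i j)))
        - (1 / 2) * (∑ i, ∑ k, (∑ j, M' i j * Ω j k) * M' i k)
        - (1 / 2) * ∑ i, ∑ j, S i j * Ω j j) := by
    funext M'
    simp only [varObj, Matrix.trace, Matrix.diag, Matrix.mul_apply, Matrix.add_apply,
      Matrix.transpose_apply, hC]
  refine ⟨(∑ i, ∑ j, (Y i j • E i j - A i j • E i j)) -
      (1 / 2 : ℝ) • (∑ i, ∑ k, ((∑ j, M i j * Ω j k) • E i k
        + M i k • (∑ j, Ω j k • E i j))), ?_, ?_⟩
  · rw [hfun]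
    exact (hsum.sub (hq.const_mul (1 / 2))).sub_const _
  · intro H
    have key : (∑ i, ∑ k, ((∑ j, M i j * Ω j k) * H i k
        + M i k * (∑ j, Ω j k * H i j))) = 2 * ∑ i, ∑ j, H i j * (M * Ω) i j := by
      rw [Finset.mul_sum]
      refine Finset.sum_congr rfl fun i _ => ?_
      rw [Finset.sum_add_distrib]
      have t1 : (∑ k, (∑ j, M i j * Ω j k) * H i k) = ∑ j, H i j * (M * Ω) i j := by
        refine Finset.sum_congr rfl fun k _ => ?_
        simp [Matrix.mul_apply, mul_comm]
      have t2 : (∑ k, M i k * (∑ j, Ω j k * H i j)) = ∑ j, H i j * (M * Ω) i j := by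
        simp_rw [Finset.mul_sum]
        rw [Finset.sum_comm]
        refine Finset.sum_congr rfl fun j _ => ?_
        rw [Matrix.mul_apply, Finset.mul_sum]
        refine Finset.sum_congr rfl fun k _ => ?_
        have : Ω j k = Ω k j := by rw [← hΩ.apply j k]
        rw [this]; ring
      rw [t1, t2]; ring
    have hAeq : (Matrix.of fun i j => Real.exp ((O + X * B + M) i j + S i j / 2)) = A := by
      funext i j
      simp [hA, hC, Matrix.add_apply]
    rw [hAeq]
    simp only [ContinuousLinearMap.coe_sub', Pi.sub_apply, ContinuousLinearMap.coe_smul',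
      Pi.smul_apply, ContinuousLinearMap.coe_sum', Finset.sum_apply,
      ContinuousLinearMap.sub_apply, ContinuousLinearMap.smul_apply, hE, entryCLM_apply,
      ContinuousLinearMap.add_apply, smul_eq_mul]
    rw [key]
    simp only [Matrix.trace, Matrix.diag, Matrix.mul_apply, Matrix.sub_apply,
      Matrix.transpose_apply]
    conv_rhs => rw [Finset.sum_comm]
    have h2 : ∀ x : ℝ, (1 : ℝ) / 2 * (2 * x) = x := fun x => by ring
    rw [h2]
    rw [← Finset.sum_sub_distrib]
    refine Finset.sum_congr rfl fun i _ => ?_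
    rw [← Finset.sum_sub_distrib]
    refine Finset.sum_congr rfl fun j _ => ?_
    ring
end
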